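/- arXiv:1202.1129 — 4 statements merged into one kernel-verified Lean document; each statement's English description precedes it below -/
import Mathlib

section
/- Let A be a unital topological algebra, and for n ∈ ℕ let μ_n^{sym}(x_1,…,x_n) := (1/n!) ∑_{σ ∈ S_n} x_{σ(1)}⋯x_{σ(n)} be the symmetrization of the n-fold multiplication map, and π_n(x) := x^n. Then for continuous seminorms p, q on A, ‖μ_n^{sym}‖_{p,q} ≤ (n^n / n!) · ‖π_n‖_{p,q}, where ‖π_n‖_{p,q} := sup{p(x^n) : q(x) ≤ 1}. -/
/-!
Expanding `(∑ εᵢ xᵢ)ⁿ` multilinearly and averaging it against the sign `∏ εᵢ` over all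
`ε ∈ {±1}ⁿ` leaves the monomial `x_{r 1} ⋯ x_{r n}` with coefficient a character sum over the
sign group, which vanishes unless `r` is a permutation. This gives the polarization identity
`2ⁿ ∑_σ x_{σ 1} ⋯ x_{σ n} = ∑_ε (∏ εᵢ) (∑ εᵢ xᵢ)ⁿ`. For `q xᵢ ≤ 1` we have `q (∑ εᵢ xᵢ) ≤ n`,
and homogeneity gives `p (yⁿ) ≤ ‖πₙ‖ q(y)ⁿ`, so each of the `2ⁿ` terms is at most `nⁿ ‖πₙ‖`.
-/

open scoped ENNReal

/-- The symmetrization `μ_n^{sym}(x₁,…,xₙ) = (1/n!) ∑_{σ ∈ S_n} x_{σ(1)} ⋯ x_{σ(n)}`. -/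
noncomputable def muSym {A : Type*} [Ring A] [Algebra ℂ A] (n : ℕ) (x : Fin n → A) : A :=
  (Nat.factorial n : ℂ)⁻¹ • ∑ σ : Equiv.Perm (Fin n), (List.ofFn (x ∘ σ)).prod

/-- `‖μ_n^{sym}‖_{p,q}`. -/
noncomputable def muSymNorm {A : Type*} [Ring A] [Algebra ℂ A]
    (p q : Seminorm ℂ A) (n : ℕ) : ℝ≥0∞ :=
  ⨆ x : {x : Fin n → A // ∀ i, q (x i) ≤ 1}, ENNReal.ofReal (p (muSym n x.1))

/-- `‖π_n‖_{p,q} = sup {p (x^n) : q x ≤ 1}`. -/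
noncomputable def piNorm {A : Type*} [Ring A] [Algebra ℂ A]
    (p q : Seminorm ℂ A) (n : ℕ) : ℝ≥0∞ :=
  ⨆ x : {x : A // q x ≤ 1}, ENNReal.ofReal (p (x.1 ^ n))

open Finset

section SignCharacter

variable {ι : Type*} [Fintype ι]

def signCharacter (r : ι → ι) : (ι → ℤˣ) →* ℤˣ where
  toFun ε := ∏ i, ε i * ε (r i)
  map_one' := by simp
  map_mul' ε δ := by
    simp only [Pi.mul_apply, ← prod_mul_distrib]
    exact prod_congr rfl fun i _ => mul_mul_mul_comm _ _ _ _

lemma signCharacter_eq_one_iff [DecidableEq ι] (r : ι → ι) :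
    signCharacter r = 1 ↔ r.Bijective := by
  refine ⟨fun h => ?_, fun hr => ?_⟩
  · rw [← Finite.surjective_iff_bijective]
    by_contra hr
    obtain ⟨i, hi⟩ := not_forall.1 hr
    -- flipping the sign at `i ∉ range r` flips only the factor `ε i`
    have := DFunLike.congr_fun h (Pi.mulSingle i (-1))
    simp [signCharacter, prod_mul_distrib, Pi.mulSingle_apply, not_exists.1 hi] at this
  · refine MonoidHom.ext fun ε => ?_
    change ∏ i, ε i * ε (r i) = 1
    rw [prod_mul_distrib, hr.prod_comp ε, Int.units_mul_self]

lemma sum_signCharacter [DecidableEq ι] (r : ι → ι) :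
    ∑ ε : ι → ℤˣ, (signCharacter r ε : ℤ) = if r.Bijective then 2 ^ Fintype.card ι else 0 := by
  split_ifs with hr
  · simp [(signCharacter_eq_one_iff r).2 hr]
  · refine sum_hom_units_eq_zero ((Units.coeHom ℤ).comp (signCharacter r)) fun h => hr ?_
    exact (signCharacter_eq_one_iff r).1 <|
      MonoidHom.ext fun ε => Units.ext (DFunLike.congr_fun h ε)

end SignCharacter

theorem MultilinearMap.polarization {ι M N : Type*} [Fintype ι] [DecidableEq ι]
    [AddCommGroup M] [AddCommGroup N] (f : MultilinearMap ℤ (fun _ : ι => M) N) (x : ι → M) :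
    ∑ ε : ι → ℤˣ, ((∏ i, ε i : ℤˣ) : ℤ) • f (fun _ => ∑ i, (ε i : ℤ) • x i) =
      (2 ^ Fintype.card ι : ℤ) • ∑ σ : Equiv.Perm ι, f (x ∘ σ) := by
  calc _ = ∑ ε : ι → ℤˣ, ∑ r : ι → ι, (signCharacter r ε : ℤ) • f (x ∘ r) := by
        refine sum_congr rfl fun ε _ => ?_
        rw [f.map_sum, smul_sum]
        refine sum_congr rfl fun r _ => ?_
        rw [f.map_smul_univ (fun k => (ε (r k) : ℤ)) (fun k => x (r k)), smul_smul]
        simp [signCharacter, prod_mul_distrib, Function.comp_def]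
    _ = ∑ r : ι → ι, if r.Bijective then (2 ^ Fintype.card ι : ℤ) • f (x ∘ r) else 0 := by
        rw [sum_comm]
        simp_rw [← sum_smul, sum_signCharacter, ite_smul, zero_smul]
    _ = _ := by
        rw [← sum_filter, smul_sum]
        refine (sum_bij (fun (σ : Equiv.Perm ι) _ => ⇑σ)
          (fun σ _ => mem_filter.2 ⟨mem_univ _, σ.bijective⟩)
          (fun _ _ _ _ h => Equiv.coe_fn_injective h)
          (fun r hr => ⟨Equiv.ofBijective r (mem_filter.1 hr).2, mem_univ _, rfl⟩)
          fun _ _ => rfl).symm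

lemma Seminorm.map_units_int_smul {𝕜 E : Type*} [NormedField 𝕜] [AddCommGroup E] [Module 𝕜 E]
    (p : Seminorm 𝕜 E) (u : ℤˣ) (a : E) : p ((u : ℤ) • a) = p a := by
  rcases Int.units_eq_one_or u with rfl | rfl <;> simp

open Filter Topology in
lemma Seminorm.map_pow_le_mul_pow {𝕜 A : Type*} [RCLike 𝕜] [Ring A] [Algebra 𝕜 A]
    (p q : Seminorm 𝕜 A) {n : ℕ} {C : ℝ} (hC : ∀ x, q x ≤ 1 → p (x ^ n) ≤ C) (y : A) :
    p (y ^ n) ≤ C * q y ^ n := by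
  have h_pos : ∀ ε > 0, p (y ^ n) ≤ C * (q y + ε) ^ n := by
    intro ε hε
    have ht : 0 < q y + ε := by positivity
    have := hC (((q y + ε : ℝ) : 𝕜)⁻¹ • y) <| by
      rw [map_smul_eq_mul, norm_inv, RCLike.norm_ofReal, abs_of_pos ht, inv_mul_le_one₀ ht]
      linarith
    rw [smul_pow, map_smul_eq_mul, norm_pow, norm_inv, RCLike.norm_ofReal, abs_of_pos ht,
      inv_pow, inv_mul_le_iff₀ (by positivity), mul_comm] at this
    exact this
  have h_lim : Tendsto (fun ε => C * (q y + ε) ^ n) (𝓝[>] 0) (𝓝 (C * q y ^ n)) := by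
    simpa using ((continuous_const_add (q y)).pow n |>.const_mul C).tendsto 0
      |>.mono_left nhdsWithin_le_nhds
  exact ge_of_tendsto h_lim (eventually_nhdsWithin_of_forall h_pos)

lemma apply_muSym_le {A : Type*} [Ring A] [Algebra ℂ A] (p q : Seminorm ℂ A) {n : ℕ} {C : ℝ}
    (hC : ∀ x, q x ≤ 1 → p (x ^ n) ≤ C) (x : Fin n → A) (hx : ∀ i, q (x i) ≤ 1) :
    p (muSym n x) ≤ (n : ℝ) ^ n / (Nat.factorial n : ℝ) * C := by
  set S := ∑ σ : Equiv.Perm (Fin n), (List.ofFn (x ∘ σ)).prod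
  have h_polar := (MultilinearMap.mkPiAlgebraFin ℤ n A).polarization x
  simp only [MultilinearMap.mkPiAlgebraFin_apply_const] at h_polar
  simp only [MultilinearMap.mkPiAlgebraFin_apply, Fintype.card_fin] at h_polar
  have hC0 : 0 ≤ C := (apply_nonneg p _).trans (hC 0 (by simp))
  have h_signed : ∀ ε : Fin n → ℤˣ, q (∑ i, (ε i : ℤ) • x i) ≤ n := fun ε => calc
    q (∑ i, (ε i : ℤ) • x i) ≤ ∑ i, q ((ε i : ℤ) • x i) :=
      le_sum_of_subadditive q (map_zero q).le (map_add_le_add q) _ _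
    _ ≤ ∑ _i : Fin n, 1 := sum_le_sum fun i _ => (q.map_units_int_smul _ _).trans_le (hx i)
    _ = n := by simp
  have h_two_pow : (2 : ℝ) ^ n * p S ≤ 2 ^ n * (n ^ n * C) := calc
    (2 : ℝ) ^ n * p S = p ((2 ^ n : ℤ) • S) := by
      rw [← Int.cast_smul_eq_zsmul ℂ, map_smul_eq_mul]; simp
    _ = p (∑ ε : Fin n → ℤˣ, ((∏ i, ε i : ℤˣ) : ℤ) • (∑ i, (ε i : ℤ) • x i) ^ n) := by
      rw [h_polar]
    _ ≤ ∑ ε : Fin n → ℤˣ, p ((∑ i, (ε i : ℤ) • x i) ^ n) :=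
      (le_sum_of_subadditive p (map_zero p).le (map_add_le_add p) _ _).trans
        (sum_le_sum fun ε _ => (p.map_units_int_smul _ _).le)
    _ ≤ ∑ _ε : Fin n → ℤˣ, (n : ℝ) ^ n * C := sum_le_sum fun ε _ => by
      rw [mul_comm]
      exact (p.map_pow_le_mul_pow q hC _).trans (by gcongr; exact h_signed ε)
    _ = 2 ^ n * (n ^ n * C) := by simp
  have h_sum : p S ≤ n ^ n * C := le_of_mul_le_mul_left h_two_pow (by positivity)
  calc p (muSym n x) = p S / n.factorial := by
        change p ((n.factorial : ℂ)⁻¹ • S) = _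
        rw [map_smul_eq_mul, div_eq_inv_mul]; simp
    _ ≤ n ^ n * C / n.factorial := by gcongr
    _ = _ := by ring

theorem stmt2_general {A : Type*} [Ring A] [Algebra ℂ A]
    (p q : Seminorm ℂ A) (n : ℕ) :
    muSymNorm p q n ≤
      ENNReal.ofReal ((n : ℝ) ^ n / (Nat.factorial n : ℝ)) * piNorm p q n := by
  by_cases h_top : piNorm p q n = ⊤
  · have h_coeff : 0 < (n : ℝ) ^ n / n.factorial :=
      div_pos (by exact_mod_cast Nat.pow_self_pos) (by positivity)
    rw [h_top, ENNReal.mul_top (ENNReal.ofReal_pos.2 h_coeff).ne']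
    exact le_top
  have hC : ∀ x, q x ≤ 1 → p (x ^ n) ≤ (piNorm p q n).toReal := fun x hx =>
    (ENNReal.ofReal_le_iff_le_toReal h_top).1 <|
      le_iSup (fun z : {x : A // q x ≤ 1} => ENNReal.ofReal (p (z.1 ^ n))) ⟨x, hx⟩
  refine iSup_le fun x => ?_
  calc ENNReal.ofReal (p (muSym n x.1))
      ≤ ENNReal.ofReal ((n : ℝ) ^ n / n.factorial * (piNorm p q n).toReal) :=
        ENNReal.ofReal_le_ofReal (apply_muSym_le p q hC x.1 x.2)
    _ = ENNReal.ofReal ((n : ℝ) ^ n / n.factorial) * piNorm p q n := by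
        rw [ENNReal.ofReal_mul (by positivity), ENNReal.ofReal_toReal h_top]

theorem stmt2 {A : Type*} [Ring A] [Algebra ℂ A]
    [TopologicalSpace A] [IsTopologicalRing A] [ContinuousSMul ℂ A]
    (p q : Seminorm ℂ A) (hp : Continuous p) (hq : Continuous q) (n : ℕ) (hn : 1 ≤ n) :
    muSymNorm p q n ≤
      ENNReal.ofReal ((n : ℝ) ^ n / (Nat.factorial n : ℝ)) * piNorm p q n :=
  stmt2_general p q n
end

section
/- Let F be a Mackey-complete complex locally convex space, p_n : E → F continuous homogeneous polynomials of degree n, x ∈ E, and r > 1 such that ∑_{n≥0} r^n p_n(x) converges in F. Then the partial sums (∑_{k=0}^n p_k(x))_{n∈ℕ} form a Mackey-Cauchy sequence in F and hence converge in F. -/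
/-!
Put `y k := r ^ k • p k x`. The series `∑ y k` converges, so `y k → 0` and `{y k}` is bounded;
let `B` be its (real) absolutely convex hull, which is bounded because `F` is locally convex.
Since `p k x = r⁻¹ ^ k • y k`, a block of partial sums is a combination of points of `B` with
geometric weights: `∑_{m ≤ k < n} p k x ∈ (r⁻¹ ^ m / (1 - r⁻¹)) • B`, so the partial sums are
Mackey-Cauchy, and they converge by Mackey-completeness.
-/

open Filter
open scoped Pointwise

/-- A Mackey-Cauchy sequence: `x n - x m ∈ r n m • B` for some bounded set `B` and
nonnegative reals `r n m → 0`. -/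
def MackeyCauchy {F : Type*} [AddCommGroup F] [Module ℂ F] [TopologicalSpace F]
    (x : ℕ → F) : Prop :=
  ∃ (B : Set F) (r : ℕ → ℕ → ℝ), Bornology.IsVonNBounded ℂ B ∧ (∀ n m, 0 ≤ r n m) ∧
    Tendsto (fun nm : ℕ × ℕ => r nm.1 nm.2) atTop (nhds 0) ∧
    ∀ n m, x n - x m ∈ (r n m : ℂ) • B

/-- A locally convex space is Mackey-complete if every Mackey-Cauchy sequence converges. -/
def MackeyComplete (F : Type*) [AddCommGroup F] [Module ℂ F] [TopologicalSpace F] : Prop :=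
  ∀ x : ℕ → F, MackeyCauchy x → ∃ l, Tendsto x atTop (nhds l)

open Set Bornology
open scoped Topology

theorem Filter.Tendsto.tendsto_nhds_zero_of_sum_range {G : Type*} [AddCommGroup G]
    [TopologicalSpace G] [IsTopologicalAddGroup G] {f : ℕ → G} {l : G}
    (h : Tendsto (fun N => ∑ k ∈ Finset.range N, f k) atTop (𝓝 l)) :
    Tendsto f atTop (𝓝 0) := by
  have h' := (h.comp (tendsto_add_atTop_nat 1)).sub h
  simpa only [sub_self, Function.comp_def, Finset.sum_range_succ_sub_sum] using h'

section LocallyConvex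

variable {𝕜 F : Type*} [NormedField 𝕜] [AddCommGroup F] [Module ℝ F] [Module 𝕜 F]
  [SMulCommClass 𝕜 ℝ F] [TopologicalSpace F] [LocallyConvexSpace ℝ F]

theorem Bornology.IsVonNBounded.convexHull {s : Set F} (hs : IsVonNBounded 𝕜 s) :
    IsVonNBounded 𝕜 (convexHull ℝ s) := by
  intro V hV
  obtain ⟨W, ⟨hW, hWconv⟩, hWV⟩ := (LocallyConvexSpace.convex_basis_zero ℝ F).mem_iff.1 hV
  refine (hs hW).eventually.mono fun a ha => ?_
  have hconv : Convex ℝ (a • W) := by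
    rw [← Set.image_smul]
    exact hWconv.linear_image (DistribSMul.toLinearMap ℝ F a)
  exact (convexHull_min ha hconv).trans (Set.smul_set_mono hWV)

theorem Bornology.IsVonNBounded.absConvexHull [IsTopologicalAddGroup F] {s : Set F}
    (hs : IsVonNBounded 𝕜 s) :
    IsVonNBounded 𝕜 (absConvexHull ℝ s) := by
  rw [← convexHull_union_neg_eq_absConvexHull]
  exact (hs.union hs.neg).convexHull

end LocallyConvex

section Convex

variable {F : Type*} [AddCommGroup F] [Module ℝ F] {B : Set F}

theorem Convex.sum_smul_mem_smul_of_sum_le {ι : Type*} (hB : Convex ℝ B) (h0 : (0 : F) ∈ B)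
    {t : Finset ι} {w : ι → ℝ} {z : ι → F} {c : ℝ} (hc : 0 < c) (hw : ∀ i ∈ t, 0 ≤ w i)
    (hwc : ∑ i ∈ t, w i ≤ c) (hz : ∀ i ∈ t, z i ∈ B) :
    ∑ i ∈ t, w i • z i ∈ c • B := by
  set s := ∑ i ∈ t, w i
  rcases (Finset.sum_nonneg hw).eq_or_lt with hs | hs
  · have hw0 : ∀ i ∈ t, w i = 0 := (Finset.sum_eq_zero_iff_of_nonneg hw).1 hs.symm
    rw [Finset.sum_eq_zero fun i hi => by rw [hw0 i hi, zero_smul]]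
    exact Set.zero_mem_smul_set h0
  · have hmean : ∑ i ∈ t, (w i / s) • z i ∈ B :=
      hB.sum_mem (fun i hi => div_nonneg (hw i hi) hs.le)
        (by rw [← Finset.sum_div, div_self hs.ne']) hz
    refine ⟨(s / c) • ∑ i ∈ t, (w i / s) • z i,
      hB.smul_mem_of_zero_mem h0 hmean ⟨by positivity, (div_le_one hc).2 hwc⟩, ?_⟩
    simp only [smul_smul, Finset.smul_sum]
    refine Finset.sum_congr rfl fun i _ => ?_
    have hs0 : s ≠ 0 := hs.ne'
    congr 1
    field_simp

theorem Convex.sum_Ico_geom_smul_mem (hB : Convex ℝ B) (h0 : (0 : F) ∈ B) {q : ℝ}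
    (hq0 : 0 < q) (hq1 : q < 1) {z : ℕ → F} (hz : ∀ k, z k ∈ B) (m n : ℕ) :
    ∑ k ∈ Finset.Ico m n, q ^ k • z k ∈ (q ^ m / (1 - q)) • B :=
  hB.sum_smul_mem_smul_of_sum_le h0 (div_pos (pow_pos hq0 m) (sub_pos.2 hq1))
    (fun k _ => (pow_pos hq0 k).le) (geom_sum_Ico_le_of_lt_one hq0.le hq1) fun k _ => hz k

end Convex

theorem Complex.ofReal_smul_set {F : Type*} [AddCommGroup F] [Module ℂ F] [Module ℝ F]
    [IsScalarTower ℝ ℂ F] (c : ℝ) (s : Set F) : (c : ℂ) • s = c • s := by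
  simp only [← Set.image_smul, ← Complex.coe_algebraMap, algebraMap_smul]

section Mackey

variable {F : Type*} [AddCommGroup F] [Module ℂ F] [TopologicalSpace F]

theorem mackeyCauchy_of_sub_mem_smul {x : ℕ → F} {B : Set F} {ρ : ℕ → ℝ}
    (hB : IsVonNBounded ℂ B) (hBneg : -B ⊆ B) (hρ0 : ∀ n, 0 ≤ ρ n)
    (hρ : Tendsto ρ atTop (𝓝 0)) (hx : ∀ m n, m ≤ n → x n - x m ∈ (ρ m : ℂ) • B) :
    MackeyCauchy x := by
  have hmin : Tendsto (fun nm : ℕ × ℕ => min nm.1 nm.2) atTop atTop :=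
    tendsto_atTop_atTop_of_monotone (fun _ _ h => min_le_min h.1 h.2) fun b => ⟨(b, b), by simp⟩
  refine ⟨B, fun n m => ρ (min n m), hB, fun _ _ => hρ0 _, hρ.comp hmin, fun n m => ?_⟩
  rcases le_total m n with h | h
  · simpa only [min_eq_right h] using hx m n h
  · obtain ⟨b, hb, hbx⟩ := hx n m h
    refine ⟨-b, hBneg (Set.neg_mem_neg.2 hb), ?_⟩
    simp only [min_eq_left h, smul_neg, hbx, neg_sub]

theorem mackeyCauchy_sum_range_geom_smul [IsTopologicalAddGroup F] [Module ℝ F]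
    [IsScalarTower ℝ ℂ F] [LocallyConvexSpace ℝ F] {y : ℕ → F}
    (hy : IsVonNBounded ℂ (range y)) {q : ℝ} (hq0 : 0 < q) (hq1 : q < 1) :
    MackeyCauchy fun N => ∑ k ∈ Finset.range N, q ^ k • y k := by
  have hBal : Balanced ℝ (absConvexHull ℝ (range y)) := balanced_absConvexHull
  have hyB : ∀ k, y k ∈ absConvexHull ℝ (range y) :=
    fun k => subset_absConvexHull (mem_range_self k)
  refine mackeyCauchy_of_sub_mem_smul hy.absConvexHull (fun v hv => hBal.neg_mem_iff.1 hv)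
    (fun m => (div_pos (pow_pos hq0 m) (sub_pos.2 hq1)).le)
    (by simpa only [zero_div] using
      (tendsto_pow_atTop_nhds_zero_of_lt_one hq0.le hq1).div_const (1 - q)) fun m n h => ?_
  rw [← Finset.sum_Ico_eq_sub _ h, Complex.ofReal_smul_set]
  exact convex_absConvexHull.sum_Ico_geom_smul_mem (hBal.zero_mem ⟨_, hyB 0⟩) hq0 hq1 hyB m n

end Mackey

theorem stmt7_general {E F : Type*}
    [AddCommGroup F] [Module ℂ F] [TopologicalSpace F]
    [IsTopologicalAddGroup F] [ContinuousSMul ℂ F]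
    [Module ℝ F] [IsScalarTower ℝ ℂ F] [LocallyConvexSpace ℝ F]
    (hF : MackeyComplete F) (p : ℕ → E → F)
    (x : E) (r : ℝ) (hr : 1 < r)
    (hconv : ∃ l, Tendsto (fun N => ∑ k ∈ Finset.range N, (r : ℂ) ^ k • p k x)
      atTop (nhds l)) :
    MackeyCauchy (fun N => ∑ k ∈ Finset.range N, p k x) ∧
      ∃ l, Tendsto (fun N => ∑ k ∈ Finset.range N, p k x) atTop (nhds l) := by
  obtain ⟨l, hl⟩ := hconv
  have hbdd : IsVonNBounded ℂ (range fun k => (r : ℂ) ^ k • p k x) :=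
    hl.tendsto_nhds_zero_of_sum_range.isVonNBounded_range ℂ
  have hp : ∀ k, p k x = r⁻¹ ^ k • (r : ℂ) ^ k • p k x := fun k => by
    rw [← algebraMap_smul ℂ (r⁻¹ ^ k), smul_smul, map_pow, map_inv₀, Complex.coe_algebraMap,
      ← mul_pow, inv_mul_cancel₀ (by exact_mod_cast (zero_lt_one.trans hr).ne'), one_pow,
      one_smul]
  have hMC : MackeyCauchy fun N => ∑ k ∈ Finset.range N, p k x := by
    simpa only [← hp] using
      mackeyCauchy_sum_range_geom_smul hbdd (inv_pos.2 (zero_lt_one.trans hr))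
        (inv_lt_one_of_one_lt₀ hr)
  exact ⟨hMC, hF _ hMC⟩

theorem stmt7 {E F : Type*}
    [AddCommGroup E] [Module ℂ E] [TopologicalSpace E]
    [AddCommGroup F] [Module ℂ F] [TopologicalSpace F]
    [IsTopologicalAddGroup F] [ContinuousSMul ℂ F]
    [Module ℝ F] [IsScalarTower ℝ ℂ F] [LocallyConvexSpace ℝ F]
    (hF : MackeyComplete F) (p : ℕ → E → F)
    (hpoly : ∀ n, ∃ β : ContinuousMultilinearMap ℂ (fun _ : Fin n => E) F,
      ∀ x, p n x = β fun _ => x)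
    (x : E) (r : ℝ) (hr : 1 < r)
    (hconv : ∃ l, Tendsto (fun N => ∑ k ∈ Finset.range N, (r : ℂ) ^ k • p k x)
      atTop (nhds l)) :
    MackeyCauchy (fun N => ∑ k ∈ Finset.range N, p k x) ∧
      ∃ l, Tendsto (fun N => ∑ k ∈ Finset.range N, p k x) atTop (nhds l) :=
  stmt7_general hF p x r hr hconv
end

section
/- Let A be a locally convex topological algebra over ℂ satisfying: for each continuous seminorm p there exist a continuous seminorm q and M ≥ 0 with ‖μ_n‖_{p,q} ≤ M^n for all n. Then for continuous γ : [0,1] → A for which the Picard iterates σ_n(γ) are defined, the series ∑_{n≥1} ‖σ_n(γ)‖_{C^1,p} ≤ M‖γ‖_{C^0,q}·e^{M‖γ‖_{C^0,q}} converges; in particular the Picard series ∑_{n≥0} σ_n(γ) converges absolutely in the completion of C¹([0,1],A). -/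
/-!
The seminorm `p` is not submultiplicative, so the factors `γ(s)` of the iterated integral cannot
be estimated one at a time. Instead, testing the weak integral against a functional that norms
`σ_{n+1}(t) w` (Hahn–Banach for `p`) gives `p (σ_{n+1}(t) w) ≤ ∫₀ᵗ p (σ_n(s) γ(s) w) ds`, and the
factor `γ(s)` is absorbed into the right factor `w`. By induction on `n`, with `w = y₁ ⋯ y_k`
arbitrary, `p (σ_n(t) y₁ ⋯ y_k) ≤ M^k ∏ q(y_i) (M Q t)^n / n!` where `Q = sup q ∘ γ`; the base
case `n = 0` is the bound `‖μ_k‖_{p,q} ≤ M^k`. Both parts of `‖σ_{n+1}‖_{C¹,p}` are thus at most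
`(M Q)^{n+1} / n!`, and these sum to `M Q e^{M Q}`.
-/

open Filter Set MeasureTheory

def IsWeakIntegral {A : Type*} [Ring A] [Algebra ℂ A] [TopologicalSpace A]
    (f : ℝ → A) (a b : ℝ) (v : A) : Prop :=
  ∀ lam : A →L[ℂ] ℂ, (∫ s in a..b, lam (f s)) = lam v

open scoped Nat Topology

theorem Seminorm.exists_continuousLinearMap_eq_and_norm_le {𝕜 E : Type*} [RCLike 𝕜]
    [AddCommGroup E] [Module 𝕜 E] [TopologicalSpace E] [IsTopologicalAddGroup E]
    (p : Seminorm 𝕜 E) (hp : Continuous p) (v : E) :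
    ∃ lam : E →L[𝕜] 𝕜, lam v = p v ∧ ∀ x, ‖lam x‖ ≤ p x := by
  have H : ∀ c : 𝕜, c • v = 0 → c • (p v : 𝕜) = 0 := fun c hc => by
    rw [← norm_eq_zero, norm_smul, RCLike.norm_ofReal, abs_of_nonneg (apply_nonneg p v),
      ← map_smul_eq_mul, hc, map_zero]
  let f := LinearPMap.mkSpanSingleton' (σ := RingHom.id 𝕜) v (p v : 𝕜) H
  obtain ⟨g, hgf, hgp⟩ := Module.Dual.exists_extension_of_le_seminorm f.domain f.toFun (p := p)
    (by
      rintro ⟨_, hx⟩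
      obtain ⟨c, rfl⟩ := Submodule.mem_span_singleton.1 hx
      rw [show f.toFun ⟨c • v, hx⟩ = c • (p v : 𝕜) from
          LinearPMap.mkSpanSingleton'_apply v _ H c hx, norm_smul, RCLike.norm_ofReal, abs_of_nonneg (apply_nonneg p v), map_smul_eq_mul])
  have hg : Continuous g := continuous_of_tendsto_nhds_zero g <|
    squeeze_zero_norm hgp (by simpa using hp.tendsto 0)
  exact ⟨⟨g, hg⟩, (hgf ⟨v, Submodule.mem_span_singleton_self v⟩).trans
    (LinearPMap.mkSpanSingleton'_apply_self v _ H _), hgp⟩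

section WeakIntegral

variable {A : Type*} [Ring A] [Algebra ℂ A] [TopologicalSpace A]

theorem IsWeakIntegral.mul_const [ContinuousMul A] {f : ℝ → A} {a b : ℝ} {v : A}
    (hf : IsWeakIntegral f a b v) (w : A) : IsWeakIntegral (fun s => f s * w) a b (v * w) :=
  fun lam => hf
    { (lam : A →ₗ[ℂ] ℂ).comp (LinearMap.mulRight ℂ w) with
      cont := lam.continuous.comp (continuous_mul_const w) }

theorem IsWeakIntegral.seminorm_le_integral [IsTopologicalAddGroup A]
    {p : Seminorm ℂ A} (hp : Continuous p) {f : ℝ → A} {t : ℝ} {v : A} (ht : 0 ≤ t)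
    (hf : ContinuousOn f (Icc 0 t)) (hv : IsWeakIntegral f 0 t v) :
    p v ≤ ∫ s in (0 : ℝ)..t, p (f s) := by
  obtain ⟨lam, hlam, hlam_le⟩ := p.exists_continuousLinearMap_eq_and_norm_le hp v
  rw [← uIcc_of_le ht] at hf
  calc p v = ‖lam v‖ := by rw [hlam, RCLike.norm_ofReal, abs_of_nonneg (apply_nonneg p v)]
    _ = ‖∫ s in (0 : ℝ)..t, lam (f s)‖ := by rw [hv lam]
    _ ≤ ∫ s in (0 : ℝ)..t, ‖lam (f s)‖ := intervalIntegral.norm_integral_le_integral_norm ht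
    _ ≤ ∫ s in (0 : ℝ)..t, p (f s) :=
      intervalIntegral.integral_mono_on ht
        (lam.continuous.comp_continuousOn hf).norm.intervalIntegrable
        (hp.comp_continuousOn hf).intervalIntegrable fun s _ => hlam_le (f s)

end WeakIntegral

theorem List.prod_ofFn_smul {R A : Type*} [CommMonoid R] [Monoid A] [MulAction R A]
    [IsScalarTower R A A] [SMulCommClass R A A] {k : ℕ} (c : Fin k → R) (y : Fin k → A) :
    (List.ofFn fun i => c i • y i).prod = (∏ i, c i) • (List.ofFn y).prod := by
  induction k with
  | zero => simp
  | succ k ih =>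
    rw [List.ofFn_succ, List.ofFn_succ, List.prod_cons, List.prod_cons, Fin.prod_univ_succ,
      ih (fun i => c i.succ) (fun i => y i.succ), smul_mul_smul_comm]

section MultiplicationBound

variable {𝕜 A : Type*} [RCLike 𝕜] [Ring A] [Algebra 𝕜 A] {p q : Seminorm 𝕜 A} {M : ℝ}

theorem seminorm_list_prod_le_of_le (hmu : ∀ (n : ℕ) (x : Fin n → A), (∀ i, q (x i) ≤ 1) →
      p (List.ofFn x).prod ≤ M ^ n)
    {k : ℕ} (y : Fin k → A) {r : Fin k → ℝ} (hr : ∀ i, 0 < r i) (hyr : ∀ i, q (y i) ≤ r i) :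
    p (List.ofFn y).prod ≤ M ^ k * ∏ i, r i := by
  have hnorm : ∀ i, ‖(r i : 𝕜)‖ = r i := fun i => by
    rw [RCLike.norm_ofReal, abs_of_pos (hr i)]
  have hscaled := hmu k (fun i => ((r i : 𝕜))⁻¹ • y i) fun i => by
    rw [map_smul_eq_mul, norm_inv, hnorm]
    exact inv_mul_le_one_of_le₀ (hyr i) (hr i).le
  simp only [List.prod_ofFn_smul, map_smul_eq_mul, norm_prod, norm_inv, hnorm,
    Finset.prod_inv_distrib] at hscaled
  rw [inv_mul_le_iff₀ (Finset.prod_pos fun i _ => hr i)] at hscaled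
  linarith

theorem seminorm_list_prod_le (hmu : ∀ (n : ℕ) (x : Fin n → A), (∀ i, q (x i) ≤ 1) →
      p (List.ofFn x).prod ≤ M ^ n)
    {k : ℕ} (y : Fin k → A) : p (List.ofFn y).prod ≤ M ^ k * ∏ i, q (y i) := by
  have hlim : Tendsto (fun ε : ℝ => M ^ k * ∏ i, (q (y i) + ε)) (𝓝[>] 0)
      (𝓝 (M ^ k * ∏ i, q (y i))) := by
    have : Continuous fun ε : ℝ => M ^ k * ∏ i, (q (y i) + ε) := by fun_prop
    simpa using (this.tendsto 0).mono_left nhdsWithin_le_nhds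
  refine ge_of_tendsto hlim ?_
  filter_upwards [self_mem_nhdsWithin] with ε (hε : 0 < ε)
  exact seminorm_list_prod_le_of_le hmu y (fun i => by positivity) fun i => by linarith

end MultiplicationBound

theorem integral_mul_mul_pow_div_factorial (c t : ℝ) (n : ℕ) :
    ∫ s in (0 : ℝ)..t, c * ((c * s) ^ n / n !) = (c * t) ^ (n + 1) / (n + 1)! := by
  have hintegrand (s : ℝ) : c * ((c * s) ^ n / n !) = c ^ (n + 1) / n ! * s ^ n := by ring
  simp_rw [hintegrand]
  rw [intervalIntegral.integral_const_mul, integral_pow, Nat.factorial_succ]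
  push_cast
  field_simp
  ring

theorem summable_and_tsum_le_mul_exp {a : ℕ → ℝ} {c : ℝ} (ha : ∀ n, 0 ≤ a n)
    (hac : ∀ n, a n ≤ c ^ (n + 1) / n !) : Summable a ∧ ∑' n, a n ≤ c * Real.exp c := by
  have hexp : HasSum (fun n => c ^ (n + 1) / n !) (c * Real.exp c) := by
    simp_rw [pow_succ', mul_div_assoc]
    rw [Real.exp_eq_exp_ℝ]
    exact (NormedSpace.expSeries_div_hasSum_exp c).mul_left c
  have ha_summable : Summable a := hexp.summable.of_nonneg_of_le ha hac
  exact ⟨ha_summable, hexp.tsum_eq ▸ ha_summable.tsum_le_tsum hac hexp.summable⟩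

theorem picard_seminorm_mul_prod_le {A : Type*} [Ring A] [Algebra ℂ A] [TopologicalSpace A]
    [IsTopologicalRing A] {p q : Seminorm ℂ A} (hp : Continuous p) {M : ℝ} (hM : 0 ≤ M)
    (hmu : ∀ (n : ℕ) (x : Fin n → A), (∀ i, q (x i) ≤ 1) → p (List.ofFn x).prod ≤ M ^ n)
    {γ : ℝ → A} (hγ : ContinuousOn γ (Icc 0 1)) {σ : ℕ → ℝ → A} (hσ0 : σ 0 = fun _ => (1 : A))
    (hσcont : ∀ n, ContinuousOn (σ n) (Icc 0 1))
    (hrec : ∀ n, ∀ t ∈ Icc (0 : ℝ) 1,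
      IsWeakIntegral (fun s => σ n s * γ s) 0 t (σ (n + 1) t))
    {Q : ℝ} (hQ : ∀ s ∈ Icc (0 : ℝ) 1, q (γ s) ≤ Q) (n : ℕ) {t : ℝ} (ht : t ∈ Icc (0 : ℝ) 1)
    {k : ℕ} (y : Fin k → A) :
    p (σ n t * (List.ofFn y).prod) ≤ M ^ k * (∏ i, q (y i)) * ((M * Q * t) ^ n / n !) := by
  induction n generalizing t k with
  | zero => simpa [hσ0] using seminorm_list_prod_le hmu y
  | succ n ih =>
    set w := (List.ofFn y).prod
    set P := ∏ i, q (y i)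
    have hQ0 : 0 ≤ Q := (apply_nonneg q _).trans (hQ 0 (left_mem_Icc.2 zero_le_one))
    have hsub : Icc 0 t ⊆ Icc (0 : ℝ) 1 := Icc_subset_Icc le_rfl ht.2
    have hcont : ContinuousOn (fun s => σ n s * γ s * w) (Icc 0 t) :=
      (((hσcont n).mul hγ).mul continuousOn_const).mono hsub
    have hpointwise : ∀ s ∈ Icc 0 t,
        p (σ n s * γ s * w) ≤ M ^ k * P * (M * Q * ((M * Q * s) ^ n / n !)) := by
      intro s hs
      have hs0 : 0 ≤ s := hs.1
      have hcons := ih (hsub hs) (Fin.cons (γ s) y : Fin (k + 1) → A)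
      simp only [List.ofFn_succ, List.prod_cons, Fin.prod_univ_succ, Fin.cons_zero,
        Fin.cons_succ] at hcons
      calc p (σ n s * γ s * w)
          ≤ M ^ (k + 1) * (q (γ s) * P) * ((M * Q * s) ^ n / n !) := by rwa [mul_assoc]
        _ = M ^ k * P * (M * q (γ s) * ((M * Q * s) ^ n / n !)) := by ring
        _ ≤ M ^ k * P * (M * Q * ((M * Q * s) ^ n / n !)) := by
            gcongr
            exact hQ s (hsub hs)
    have hbound_integrable : IntervalIntegrable
        (fun s : ℝ => M ^ k * P * (M * Q * ((M * Q * s) ^ n / n !))) volume 0 t :=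
      (by fun_prop : Continuous _).intervalIntegrable 0 t
    calc p (σ (n + 1) t * w) ≤ ∫ s in (0 : ℝ)..t, p (σ n s * γ s * w) :=
          ((hrec n t ht).mul_const w).seminorm_le_integral hp ht.1 hcont
      _ ≤ ∫ s in (0 : ℝ)..t, M ^ k * P * (M * Q * ((M * Q * s) ^ n / n !)) :=
          intervalIntegral.integral_mono_on ht.1
            (hp.comp_continuousOn (uIcc_of_le ht.1 ▸ hcont)).intervalIntegrable
            hbound_integrable hpointwise
      _ = M ^ k * P * ((M * Q * t) ^ (n + 1) / (n + 1)!) := by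
          rw [intervalIntegral.integral_const_mul, integral_mul_mul_pow_div_factorial]

theorem stmt16_general {A : Type*} [Ring A] [Algebra ℂ A]
    [TopologicalSpace A] [IsTopologicalRing A]
    (p q : Seminorm ℂ A) (hp : Continuous p) (hq : Continuous q)
    (M : ℝ) (hM : 0 ≤ M)
    (hmu : ∀ (n : ℕ) (x : Fin n → A), (∀ i, q (x i) ≤ 1) →
      p (List.ofFn x).prod ≤ M ^ n)
    (γ : ℝ → A) (hγ : ContinuousOn γ (Icc 0 1))
    (σ : ℕ → ℝ → A) (hσ0 : σ 0 = fun _ => (1 : A))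
    (hσcont : ∀ n, ContinuousOn (σ n) (Icc 0 1))
    (hrec : ∀ n, ∀ t ∈ Icc (0 : ℝ) 1,
      IsWeakIntegral (fun s => σ n s * γ s) 0 t (σ (n + 1) t)) :
    -- `c1 n = ‖σ_{n+1}(γ)‖_{C¹,p}`
    Summable (fun n : ℕ => max (⨆ t : Icc (0 : ℝ) 1, p (σ (n + 1) t))
        (⨆ t : Icc (0 : ℝ) 1, p (σ n t * γ t))) ∧
      (∑' n : ℕ, max (⨆ t : Icc (0 : ℝ) 1, p (σ (n + 1) t))
          (⨆ t : Icc (0 : ℝ) 1, p (σ n t * γ t))) ≤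
        M * (⨆ s : Icc (0 : ℝ) 1, q (γ s)) *
          Real.exp (M * (⨆ s : Icc (0 : ℝ) 1, q (γ s))) := by
  have : Nonempty (Icc (0 : ℝ) 1) := ⟨⟨0, left_mem_Icc.2 zero_le_one⟩⟩
  set Q := ⨆ s : Icc (0 : ℝ) 1, q (γ s)
  have hQ : ∀ s ∈ Icc (0 : ℝ) 1, q (γ s) ≤ Q := fun s hs =>
    le_ciSup (isCompact_range (hq.comp_continuousOn hγ).domRestrict).bddAbove ⟨s, hs⟩
  have hQ0 : 0 ≤ Q := Real.iSup_nonneg fun s => apply_nonneg q _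
  have hMQt (t : Icc (0 : ℝ) 1) : 0 ≤ M * Q * t ∧ M * Q * t ≤ M * Q :=
    ⟨mul_nonneg (mul_nonneg hM hQ0) t.2.1, mul_le_of_le_one_right (mul_nonneg hM hQ0) t.2.2⟩
  have hkey := picard_seminorm_mul_prod_le hp hM hmu hγ hσ0 hσcont hrec hQ
  refine summable_and_tsum_le_mul_exp
    (fun n => (Real.iSup_nonneg fun t => apply_nonneg p _).trans (le_max_left _ _))
    fun n => max_le (ciSup_le fun t => ?_) (ciSup_le fun t => ?_) <;>
    obtain ⟨hMQt0, hMQt⟩ := hMQt t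
  · have h := hkey (n + 1) t.2 (Fin.elim0 : Fin 0 → A)
    simp only [List.ofFn_zero, List.prod_nil, mul_one, pow_zero, Finset.univ_eq_empty,
      Finset.prod_empty, one_mul] at h
    refine h.trans ?_
    gcongr ?_ ^ _ / ?_
    exact_mod_cast Nat.factorial_le n.le_succ
  · have h := hkey n t.2 ![γ t]
    simp only [List.ofFn_succ, List.ofFn_zero, List.prod_cons, List.prod_nil, mul_one, pow_one,
      Fin.prod_univ_one, Matrix.cons_val_zero] at h
    calc p (σ n t * γ t) ≤ M * q (γ t) * ((M * Q * t) ^ n / n !) := h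
      _ ≤ M * Q * ((M * Q) ^ n / n !) := by
          gcongr M * ?_ * (?_ ^ _ / _)
          exact hQ t t.2
      _ = (M * Q) ^ (n + 1) / n ! := by ring

theorem stmt16 {A : Type*} [Ring A] [Algebra ℂ A]
    [TopologicalSpace A] [IsTopologicalRing A] [ContinuousSMul ℂ A]
    [LocallyConvexSpace ℝ A]
    (p q : Seminorm ℂ A) (hp : Continuous p) (hq : Continuous q)
    (M : ℝ) (hM : 0 ≤ M)
    (hmu : ∀ (n : ℕ) (x : Fin n → A), (∀ i, q (x i) ≤ 1) →
      p (List.ofFn x).prod ≤ M ^ n)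
    (γ : ℝ → A) (hγ : ContinuousOn γ (Icc 0 1))
    (σ : ℕ → ℝ → A) (hσ0 : σ 0 = fun _ => (1 : A))
    (hσcont : ∀ n, ContinuousOn (σ n) (Icc 0 1))
    (hrec : ∀ n, ∀ t ∈ Icc (0 : ℝ) 1,
      IsWeakIntegral (fun s => σ n s * γ s) 0 t (σ (n + 1) t)) :
    -- `c1 n = ‖σ_{n+1}(γ)‖_{C¹,p}`
    Summable (fun n : ℕ => max (⨆ t : Icc (0 : ℝ) 1, p (σ (n + 1) t))
        (⨆ t : Icc (0 : ℝ) 1, p (σ n t * γ t))) ∧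
      (∑' n : ℕ, max (⨆ t : Icc (0 : ℝ) 1, p (σ (n + 1) t))
          (⨆ t : Icc (0 : ℝ) 1, p (σ n t * γ t))) ≤
        M * (⨆ s : Icc (0 : ℝ) 1, q (γ s)) *
          Real.exp (M * (⨆ s : Icc (0 : ℝ) 1, q (γ s))) :=
  stmt16_general p q hp hq M hM hmu γ hγ σ hσ0 hσcont hrec
end

section
/- Let A be a real locally convex algebra, p a continuous seminorm on A, and p_ℂ the seminorm on the complexification A_ℂ defined by p_ℂ(a+ib) := inf{∑_j |z_j| p(x_j) : a+ib = ∑_j z_j x_j, x_j ∈ A, z_j ∈ ℂ}. Then max{p(a), p(b)} ≤ p_ℂ(a+ib) ≤ p(a) + p(b) for all a, b ∈ A, and for the complexified multiplication maps, ‖(μ_n)_ℂ‖_{p_ℂ,q_ℂ} = ‖μ_n‖_{p,q}. In particular, if A satisfies condition (*), so does A_ℂ. -/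
/-!
Re and Im are real-linear contractions `ℂ → ℝ`; applied to any representation
`a + ib = ∑ z_j ⊗ x_j` they give `p a, p b ≤ ∑ |z_j| p(x_j)`, while `1 ⊗ a + i ⊗ b`
itself gives the upper bound. For the multiplication maps, choose representations of
the factors `w_i` with cost `< 1 + ε`; by multilinearity their product is a sum of
elementary tensors `(∏ z) ⊗ (∏ x)`, and homogeneity of `‖μ_n‖_{p,q}` bounds each by
`‖μ_n‖ ∏ |z| q(x)`, so `‖(μ_n)_ℂ‖ ≤ (1 + ε)^n ‖μ_n‖`. Conversely `a ↦ 1 ⊗ a` preserves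
the seminorms.
-/

open scoped TensorProduct ENNReal

/-- `‖μ_n‖_{P,Q}` for arbitrary (seminorm-like) functions `P, Q` on a ring. -/
noncomputable def muNormF {R : Type*} [Ring R] (P Q : R → ℝ) (n : ℕ) : ℝ≥0∞ :=
  ⨆ x : {x : Fin n → R // ∀ i, Q (x i) ≤ 1}, ENNReal.ofReal (P (List.ofFn x.1).prod)

/-- The complexification `p_ℂ` of a seminorm `p` on `A`, on `A_ℂ = ℂ ⊗[ℝ] A`. -/
noncomputable def seminormC {A : Type*} [Ring A] [Algebra ℝ A]
    (p : Seminorm ℝ A) (w : ℂ ⊗[ℝ] A) : ℝ :=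
  sInf {c | ∃ (m : ℕ) (z : Fin m → ℂ) (x : Fin m → A),
    w = ∑ j, z j ⊗ₜ[ℝ] x j ∧ c = ∑ j, ‖z j‖ * p (x j)}

theorem le_muNormF {R : Type*} [Ring R] (P Q : R → ℝ) {n : ℕ} {x : Fin n → R}
    (hx : ∀ i, Q (x i) ≤ 1) : ENNReal.ofReal (P (List.ofFn x).prod) ≤ muNormF P Q n :=
  le_iSup (fun y : {x : Fin n → R // ∀ i, Q (x i) ≤ 1} =>
    ENNReal.ofReal (P (List.ofFn y.1).prod)) ⟨x, hx⟩

theorem le_of_forall_pos_le_of_continuous {f : ℝ → ℝ} (hf : Continuous f) {a : ℝ}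
    (h : ∀ δ > 0, a ≤ f δ) : a ≤ f 0 :=
  ge_of_tendsto (hf.continuousWithinAt (s := Set.Ioi 0)) (eventually_nhdsWithin_of_forall h)

section

variable {A : Type*} [Ring A] [Algebra ℝ A] (p q : Seminorm ℝ A) {n : ℕ}

theorem seminormC_le_sum_tmul {ι : Type*} [Fintype ι] (z : ι → ℂ) (x : ι → A) :
    seminormC p (∑ j, z j ⊗ₜ[ℝ] x j) ≤ ∑ j, ‖z j‖ * p (x j) := by
  set e := (Fintype.equivFin ι).symm
  refine csInf_le ⟨0, ?_⟩
    ⟨Fintype.card ι, z ∘ e, x ∘ e, (e.sum_comp _).symm, (e.sum_comp _).symm⟩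
  rintro c ⟨m, z, x, -, rfl⟩
  exact Finset.sum_nonneg fun j _ => mul_nonneg (norm_nonneg _) (apply_nonneg p _)

theorem le_seminormC {w : ℂ ⊗[ℝ] A} {c : ℝ}
    (h : ∀ (m : ℕ) (z : Fin m → ℂ) (x : Fin m → A),
      w = ∑ j, z j ⊗ₜ[ℝ] x j → c ≤ ∑ j, ‖z j‖ * p (x j)) :
    c ≤ seminormC p w := by
  obtain ⟨m, z, x, hw⟩ := TensorProduct.exists_sum_tmul_eq w
  refine le_csInf (by exact ⟨_, m, z, x, hw, rfl⟩) ?_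
  rintro _ ⟨m, z, x, hw, rfl⟩
  exact h m z x hw

theorem exists_sum_tmul_lt_of_seminormC_lt {w : ℂ ⊗[ℝ] A} {c : ℝ} (h : seminormC p w < c) :
    ∃ (m : ℕ) (z : Fin m → ℂ) (x : Fin m → A),
      w = ∑ j, z j ⊗ₜ[ℝ] x j ∧ ∑ j, ‖z j‖ * p (x j) < c := by
  obtain ⟨m, z, x, hw⟩ := TensorProduct.exists_sum_tmul_eq w
  obtain ⟨_, ⟨m, z, x, hw, rfl⟩, hlt⟩ :=
    exists_lt_of_csInf_lt (by exact ⟨_, m, z, x, hw, rfl⟩) h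
  exact ⟨m, z, x, hw, hlt⟩

theorem seminorm_lid_rTensor_le_seminormC (f : ℂ →ₗ[ℝ] ℝ) (hf : ∀ z, |f z| ≤ ‖z‖)
    (w : ℂ ⊗[ℝ] A) : p (TensorProduct.lid ℝ A (f.rTensor A w)) ≤ seminormC p w := by
  refine le_seminormC p fun m z x hw => ?_
  subst hw
  simp only [map_sum, LinearMap.rTensor_tmul, TensorProduct.lid_tmul]
  refine (Finset.le_sum_of_subadditive p (map_zero p).le (map_add_le_add p) _ _).trans
    (Finset.sum_le_sum fun j _ => ?_)
  rw [map_smul_eq_mul, Real.norm_eq_abs]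
  exact mul_le_mul_of_nonneg_right (hf _) (apply_nonneg p _)

theorem max_le_seminormC_one_tmul_add_I_tmul (a b : A) :
    max (p a) (p b) ≤ seminormC p ((1 : ℂ) ⊗ₜ[ℝ] a + Complex.I ⊗ₜ[ℝ] b) := by
  refine max_le ?_ ?_
  · simpa using seminorm_lid_rTensor_le_seminormC p Complex.reLm Complex.abs_re_le_norm
      ((1 : ℂ) ⊗ₜ[ℝ] a + Complex.I ⊗ₜ[ℝ] b)
  · simpa using seminorm_lid_rTensor_le_seminormC p Complex.imLm Complex.abs_im_le_norm
      ((1 : ℂ) ⊗ₜ[ℝ] a + Complex.I ⊗ₜ[ℝ] b)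

theorem seminormC_one_tmul_add_I_tmul_le (a b : A) :
    seminormC p ((1 : ℂ) ⊗ₜ[ℝ] a + Complex.I ⊗ₜ[ℝ] b) ≤ p a + p b := by
  simpa [Fin.sum_univ_two] using seminormC_le_sum_tmul p ![1, Complex.I] ![a, b]

theorem seminormC_one_tmul (a : A) : seminormC p ((1 : ℂ) ⊗ₜ[ℝ] a) = p a := by
  refine le_antisymm (by simpa using seminormC_le_sum_tmul p ![(1 : ℂ)] ![a]) ?_
  simpa using max_le_seminormC_one_tmul_add_I_tmul p a 0

theorem listProd_ofFn_smul (c : Fin n → ℝ) (x : Fin n → A) :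
    (List.ofFn fun i => c i • x i).prod = (∏ i, c i) • (List.ofFn x).prod :=
  (MultilinearMap.mkPiAlgebraFin ℝ n A).map_smul_univ c x

theorem listProd_ofFn_tmul (z : Fin n → ℂ) (x : Fin n → A) :
    (List.ofFn fun i => z i ⊗ₜ[ℝ] x i).prod =
      (∏ i, z i) ⊗ₜ[ℝ] (List.ofFn x).prod := by
  induction n with
  | zero => simp [Algebra.TensorProduct.one_def]
  | succ n ih =>
    simp only [List.ofFn_succ, List.prod_cons, Fin.prod_univ_succ, ih,
      Algebra.TensorProduct.tmul_mul_tmul]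

theorem seminorm_listProd_le_muNormF_mul_prod (hM : muNormF p q n ≠ ⊤) (x : Fin n → A) :
    p (List.ofFn x).prod ≤ (muNormF p q n).toReal * ∏ i, q (x i) := by
  set M := (muNormF p q n).toReal
  -- rescaling by `q (x i) + δ > 0` rather than `q (x i)` also covers factors with `q (x i) = 0`
  have hδ : ∀ δ > 0, p (List.ofFn x).prod ≤ M * ∏ i, (q (x i) + δ) := by
    intro δ hδ
    have hc : ∀ i, 0 < q (x i) + δ := fun i => add_pos_of_nonneg_of_pos (apply_nonneg q _) hδ
    have hunit : ∀ i, q ((q (x i) + δ)⁻¹ • x i) ≤ 1 := fun i => by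
      rw [map_smul_eq_mul, Real.norm_eq_abs, abs_of_pos (inv_pos.2 (hc i)),
        inv_mul_le_iff₀ (hc i), mul_one]
      linarith
    have hbound : p (List.ofFn fun i => (q (x i) + δ)⁻¹ • x i).prod ≤ M :=
      (ENNReal.ofReal_le_iff_le_toReal hM).1 (le_muNormF _ _ hunit)
    have hprod : 0 < ∏ i, (q (x i) + δ) := Finset.prod_pos fun i _ => hc i
    rwa [listProd_ofFn_smul, map_smul_eq_mul, Finset.prod_inv_distrib, Real.norm_eq_abs,
      abs_of_pos (inv_pos.2 hprod), inv_mul_le_iff₀ hprod, mul_comm] at hbound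
  simpa using le_of_forall_pos_le_of_continuous (by fun_prop) hδ

theorem seminormC_listProd_sum_tmul_le (hM : muNormF p q n ≠ ⊤) {m : Fin n → ℕ}
    (z : ∀ i, Fin (m i) → ℂ) (x : ∀ i, Fin (m i) → A) :
    seminormC p (List.ofFn fun i => ∑ j, z i j ⊗ₜ[ℝ] x i j).prod ≤
      (muNormF p q n).toReal * ∏ i, ∑ j, ‖z i j‖ * q (x i j) := by
  classical
  rw [← MultilinearMap.mkPiAlgebraFin_apply (R := ℝ), MultilinearMap.map_sum]
  simp only [MultilinearMap.mkPiAlgebraFin_apply, listProd_ofFn_tmul]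
  rw [Fintype.prod_sum, Finset.mul_sum]
  refine (seminormC_le_sum_tmul p _ _).trans (Finset.sum_le_sum fun J _ => ?_)
  rw [norm_prod, Finset.prod_mul_distrib]
  calc (∏ i, ‖z i (J i)‖) * p (List.ofFn fun i => x i (J i)).prod
      ≤ (∏ i, ‖z i (J i)‖) * ((muNormF p q n).toReal * ∏ i, q (x i (J i))) :=
        mul_le_mul_of_nonneg_left (seminorm_listProd_le_muNormF_mul_prod p q hM _)
          (Finset.prod_nonneg fun i _ => norm_nonneg _)
    _ = _ := by ring

theorem seminormC_listProd_le_muNormF (hM : muNormF p q n ≠ ⊤) (w : Fin n → ℂ ⊗[ℝ] A)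
    (hw : ∀ i, seminormC q (w i) ≤ 1) :
    seminormC p (List.ofFn w).prod ≤ (muNormF p q n).toReal := by
  have hε : ∀ ε > 0,
      seminormC p (List.ofFn w).prod ≤ (muNormF p q n).toReal * (1 + ε) ^ n := by
    intro ε hε
    choose m z x hrep hcost using fun i =>
      exists_sum_tmul_lt_of_seminormC_lt q (c := 1 + ε) (by linarith [hw i])
    rw [funext hrep]
    refine (seminormC_listProd_sum_tmul_le p q hM z x).trans
      (mul_le_mul_of_nonneg_left ?_ ENNReal.toReal_nonneg)
    calc ∏ i, ∑ j, ‖z i j‖ * q (x i j) ≤ ∏ _i : Fin n, (1 + ε) :=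
          Finset.prod_le_prod (fun i _ => Finset.sum_nonneg fun j _ =>
            mul_nonneg (norm_nonneg _) (apply_nonneg q _)) fun i _ => (hcost i).le
      _ = (1 + ε) ^ n := by simp
  simpa using le_of_forall_pos_le_of_continuous (by fun_prop) hε

theorem muNormF_seminormC (n : ℕ) :
    muNormF (seminormC p) (seminormC q) n = muNormF p q n := by
  refine le_antisymm ?_ ?_
  · rcases eq_or_ne (muNormF p q n) ⊤ with hM | hM
    · exact hM ▸ le_top
    · exact iSup_le fun w =>
        (ENNReal.ofReal_le_iff_le_toReal hM).2 (seminormC_listProd_le_muNormF p q hM w.1 w.2)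
  · refine iSup_le fun x => ?_
    have hx : ∀ i, seminormC q ((1 : ℂ) ⊗ₜ[ℝ] x.1 i) ≤ 1 := fun i =>
      (seminormC_one_tmul q _).trans_le (x.2 i)
    have h := le_muNormF (seminormC p) _ hx
    rwa [listProd_ofFn_tmul, Finset.prod_const_one, seminormC_one_tmul] at h

end

theorem stmt19_general {A : Type*} [Ring A] [Algebra ℝ A]
    (p q : Seminorm ℝ A) :
    -- `max (p a) (p b) ≤ p_ℂ (a + i b) ≤ p a + p b`
    (∀ a b : A,
      max (p a) (p b) ≤ seminormC p ((1 : ℂ) ⊗ₜ[ℝ] a + Complex.I ⊗ₜ[ℝ] b) ∧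
      seminormC p ((1 : ℂ) ⊗ₜ[ℝ] a + Complex.I ⊗ₜ[ℝ] b) ≤ p a + p b) ∧
    -- `‖(μ_n)_ℂ‖_{p_ℂ,q_ℂ} = ‖μ_n‖_{p,q}`
    (∀ n : ℕ, muNormF (seminormC p) (seminormC q) n =
      muNormF (fun x : A => p x) (fun x : A => q x) n) ∧
    -- in particular, condition (*) passes to the complexification
    (∀ r : ℝ, 0 < r →
      (∑' n : ℕ, ENNReal.ofReal r ^ (n + 1) *
        muNormF (fun x : A => p x) (fun x : A => q x) (n + 1)) ≠ ⊤ →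
      (∑' n : ℕ, ENNReal.ofReal r ^ (n + 1) *
        muNormF (seminormC p) (seminormC q) (n + 1)) ≠ ⊤) := by
  have hmu := muNormF_seminormC p q
  refine ⟨fun a b => ⟨max_le_seminormC_one_tmul_add_I_tmul p a b,
    seminormC_one_tmul_add_I_tmul_le p a b⟩, hmu, fun r _ h => ?_⟩
  simpa only [hmu] using h

theorem stmt19 {A : Type*} [Ring A] [Algebra ℝ A]
    [TopologicalSpace A] [IsTopologicalRing A] [ContinuousSMul ℝ A]
    [LocallyConvexSpace ℝ A]
    (p q : Seminorm ℝ A) (hp : Continuous p) (hq : Continuous q) :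
    -- `max (p a) (p b) ≤ p_ℂ (a + i b) ≤ p a + p b`
    (∀ a b : A,
      max (p a) (p b) ≤ seminormC p ((1 : ℂ) ⊗ₜ[ℝ] a + Complex.I ⊗ₜ[ℝ] b) ∧
      seminormC p ((1 : ℂ) ⊗ₜ[ℝ] a + Complex.I ⊗ₜ[ℝ] b) ≤ p a + p b) ∧
    -- `‖(μ_n)_ℂ‖_{p_ℂ,q_ℂ} = ‖μ_n‖_{p,q}`
    (∀ n : ℕ, muNormF (seminormC p) (seminormC q) n =
      muNormF (fun x : A => p x) (fun x : A => q x) n) ∧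
    -- in particular, condition (*) passes to the complexification
    (∀ r : ℝ, 0 < r →
      (∑' n : ℕ, ENNReal.ofReal r ^ (n + 1) *
        muNormF (fun x : A => p x) (fun x : A => q x) (n + 1)) ≠ ⊤ →
      (∑' n : ℕ, ENNReal.ofReal r ^ (n + 1) *
        muNormF (seminormC p) (seminormC q) (n + 1)) ≠ ⊤) :=
  stmt19_general p q
end
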